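/- For every integer k > 1, (1/φ(k)) · Σ_{j=1}^{k} (log Γ(j/k)) · c_k(j) = (1/2) · Σ_{p | k, p prime} (log p)/(p − 1) − (log 2π)/2, where Γ is the Gamma function. -/

import Mathlib

open Finset ArithmeticFunction

/-- The Ramanujan sum `c_k(j) = ∑_{1 ≤ m ≤ k, gcd(m,k)=1} exp(2πimj/k)`. -/
noncomputable def ramanujanSum (k : ℕ) (j : ℤ) : ℂ :=
  ∑ m ∈ (Finset.Icc 1 k).filter (fun m => Nat.gcd m k = 1),
    Complex.exp (2 * (Real.pi : ℂ) * Complex.I * (m : ℂ) * (j : ℂ) / (k : ℂ))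

/-!
Kluyver's formula `c_k(j) = ∑_{t ∣ k} μ(t) (k/t) [k/t ∣ j]` turns the average into
`∑_{t ∣ k} μ(t) (k/t) ∑_{i=1}^{t} log Γ(i/t)`. Pairing `i` with `t - i`, the reflection formula
and `∏_{i=1}^{t-1} |1 - ζ^i| = t` for a primitive `t`-th root of unity `ζ` give the inner sum
`((t - 1) log 2π - log t) / 2`. What remains are the Möbius sums `∑ μ(t) = 0`,
`∑ μ(t) (k/t) = φ(k)` and `∑ μ(t) (k/t) log t = -φ(k) ∑_{p ∣ k} log p / (p - 1)`; the last one
is computed prime by prime, writing `log t = ∑_{p ∣ t} log p` for squarefree `t` and splitting off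
the divisors prime to `p`, which are the divisors of the `p`-free part of `k`.
-/

open Real
open scoped ArithmeticFunction.Moebius ArithmeticFunction.zeta

theorem Finset.sum_Icc_one_eq_sum_range {M : Type*} [AddCommMonoid M] (f : ℕ → M) (n : ℕ) :
    ∑ i ∈ Icc 1 n, f i = ∑ i ∈ range n, f (i + 1) := by
  rw [← Ico_add_one_right_eq_Icc, sum_Ico_eq_sum_range]
  simp [add_comm]

theorem Finset.sum_Icc_filter_dvd {M : Type*} [AddCommMonoid M] (f : ℕ → M) {d : ℕ} (hd : 0 < d)
    (q : ℕ) : ∑ m ∈ Icc 1 (d * q) with d ∣ m, f m = ∑ i ∈ Icc 1 q, f (d * i) := by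
  rw [← sum_image (fun _ _ _ _ h => Nat.eq_of_mul_eq_mul_left hd h)]
  congr 1
  ext m
  simp only [mem_filter, mem_Icc, mem_image]
  constructor
  · rintro ⟨⟨h1, h2⟩, i, rfl⟩
    exact ⟨i, ⟨Nat.pos_of_mul_pos_left h1, Nat.le_of_mul_le_mul_left h2 hd⟩, rfl⟩
  · rintro ⟨i, ⟨h1, h2⟩, rfl⟩
    exact ⟨⟨Nat.mul_pos hd h1, Nat.mul_le_mul_left d h2⟩, dvd_mul_right d i⟩

theorem sum_divisors_moebius {R : Type*} [Ring R] (n : ℕ) :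
    ∑ d ∈ n.divisors, (μ d : R) = if n = 1 then 1 else 0 := by
  have h : ((μ : ArithmeticFunction R) * ζ) n = (1 : ArithmeticFunction R) n := by
    rw [coe_moebius_mul_coe_zeta]
  rwa [coe_mul_zeta_apply, one_apply] at h

theorem sum_Icc_exp_two_pi_I_mul_div (q : ℕ) (j : ℤ) :
    ∑ i ∈ Icc 1 q, Complex.exp (2 * π * Complex.I * i * j / q) =
      if (q : ℤ) ∣ j then (q : ℂ) else 0 := by
  rcases q.eq_zero_or_pos with rfl | hq
  · simp
  have hζ := Complex.isPrimitiveRoot_exp q hq.ne'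
  set w := Complex.exp (2 * π * Complex.I / q) ^ j
  have hterm (i : ℕ) : Complex.exp (2 * π * Complex.I * i * j / q) = w ^ i := by
    rw [← zpow_natCast, ← zpow_mul, ← Complex.exp_int_mul]
    push_cast
    ring_nf
  have hwq : w ^ q = 1 := by
    rw [← zpow_natCast, ← zpow_mul, mul_comm j, zpow_mul, zpow_natCast, hζ.pow_eq_one, one_zpow]
  simp_rw [hterm, sum_Icc_one_eq_sum_range, pow_succ, ← sum_mul]
  by_cases hj : (q : ℤ) ∣ j
  · have hw : w = 1 := (hζ.zpow_eq_one_iff_dvd j).mpr hj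
    simp [hw, hj]
  · have hw : w ≠ 1 := fun h => hj ((hζ.zpow_eq_one_iff_dvd j).mp h)
    simp [geom_sum_eq hw, hwq, hj]

theorem ramanujanSum_eq_sum_moebius (k : ℕ) (j : ℤ) :
    ramanujanSum k j = ∑ t ∈ k.divisors,
      (μ t : ℂ) * if ((k / t : ℕ) : ℤ) ∣ j then ((k / t : ℕ) : ℂ) else 0 := by
  rcases k.eq_zero_or_pos with rfl | hk
  · simp [ramanujanSum]
  have hcoprime (m : ℕ) :
      (if Nat.gcd m k = 1 then (1 : ℂ) else 0) = ∑ t ∈ k.divisors with t ∣ m, (μ t : ℂ) := by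
    rw [← sum_divisors_moebius]
    congr 1
    ext t
    simp [Nat.dvd_gcd_iff, hk.ne', and_comm]
  rw [ramanujanSum, sum_filter]
  conv_lhs => enter [2, m]; rw [← boole_mul, hcoprime, sum_filter, sum_mul]
  rw [sum_comm]
  refine sum_congr rfl fun t ht => ?_
  obtain ⟨q, hq⟩ := Nat.dvd_of_mem_divisors ht
  have ht0 : 0 < t := Nat.pos_of_mem_divisors ht
  simp_rw [ite_mul, zero_mul]
  rw [← sum_filter, ← mul_sum, ← sum_Icc_exp_two_pi_I_mul_div, hq, sum_Icc_filter_dvd _ ht0,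
    Nat.mul_div_cancel_left q ht0]
  refine congrArg _ (sum_congr rfl fun i _ => ?_)
  have : (t : ℂ) ≠ 0 := by exact_mod_cast ht0.ne'
  congr 1
  push_cast
  field_simp

theorem sum_mul_ramanujanSum (f : ℕ → ℂ) (k : ℕ) :
    ∑ j ∈ Icc 1 k, f j * ramanujanSum k j =
      ∑ t ∈ k.divisors, (μ t : ℂ) * (k / t : ℕ) * ∑ i ∈ Icc 1 t, f (k / t * i) := by
  simp_rw [ramanujanSum_eq_sum_moebius, mul_sum]
  rw [sum_comm]
  refine sum_congr rfl fun t ht => ?_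
  have ht0 : 0 < t := Nat.pos_of_mem_divisors ht
  obtain ⟨q, rfl⟩ := Nat.dvd_of_mem_divisors ht
  have hq : 0 < q := Nat.pos_of_ne_zero (right_ne_zero_of_mul (Nat.mem_divisors.mp ht).2)
  simp only [Nat.mul_div_cancel_left q ht0, Int.natCast_dvd_natCast, mul_ite, mul_zero]
  rw [← sum_filter, mul_comm t q, sum_Icc_filter_dvd _ hq]
  exact sum_congr rfl fun i _ => by ring

theorem Complex.norm_one_sub_exp_ofReal_mul_I (x : ℝ) :
    ‖1 - Complex.exp (x * Complex.I)‖ = 2 * |Real.sin (x / 2)| := by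
  have hinv : Complex.exp (-((x / 2 : ℝ) : ℂ) * Complex.I) *
      Complex.exp (((x / 2 : ℝ) : ℂ) * Complex.I) = 1 := by
    rw [← Complex.exp_add]; simp
  have hsq : Complex.exp (((x / 2 : ℝ) : ℂ) * Complex.I) ^ 2 = Complex.exp (x * Complex.I) := by
    rw [sq, ← Complex.exp_add]; congr 1; push_cast; ring
  have hfactor : 1 - Complex.exp (x * Complex.I) = -2 * Complex.I *
      Complex.sin ((x / 2 : ℝ) : ℂ) * Complex.exp (((x / 2 : ℝ) : ℂ) * Complex.I) := by
    rw [Complex.sin]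
    linear_combination -hinv + hsq +
      (Complex.exp (-((x / 2 : ℝ) : ℂ) * Complex.I) * Complex.exp (((x / 2 : ℝ) : ℂ) * Complex.I) -
        Complex.exp (((x / 2 : ℝ) : ℂ) * Complex.I) ^ 2) * Complex.I_sq
  rw [hfactor, norm_mul, norm_mul, norm_mul, ← Complex.ofReal_sin, Complex.norm_real,
    Complex.norm_exp_ofReal_mul_I, Complex.norm_I]
  norm_num

theorem Real.sin_pi_mul_pos {x : ℝ} (h0 : 0 < x) (h1 : x < 1) : 0 < sin (π * x) :=
  Real.sin_pos_of_pos_of_lt_pi (by positivity) (by nlinarith [Real.pi_pos])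

theorem succ_div_succ_mem_Ioo {i n : ℕ} (hi : i < n) :
    ((i : ℝ) + 1) / (n + 1) ∈ Set.Ioo 0 1 := by
  refine ⟨by positivity, (div_lt_one (by positivity)).mpr ?_⟩
  exact_mod_cast Nat.succ_lt_succ hi

theorem prod_two_mul_sin_pi_mul_succ_div_succ (n : ℕ) :
    ∏ i ∈ range n, 2 * sin (π * (((i : ℝ) + 1) / (n + 1))) = n + 1 := by
  have hζ := Complex.isPrimitiveRoot_exp (n + 1) n.succ_ne_zero
  have hnorm := congrArg norm hζ.prod_one_sub_pow_eq_order
  rw [norm_prod, ← Nat.cast_add_one, Complex.norm_natCast] at hnorm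
  push_cast at hnorm
  refine Eq.trans (prod_congr rfl fun i hi => ?_) hnorm
  have hpow : Complex.exp (2 * π * Complex.I / ((n : ℂ) + 1)) ^ (i + 1) =
      Complex.exp ((2 * (π * (((i : ℝ) + 1) / (n + 1))) : ℝ) * Complex.I) := by
    rw [← Complex.exp_nat_mul]
    congr 1
    push_cast
    ring
  obtain ⟨h0, h1⟩ := succ_div_succ_mem_Ioo (mem_range.mp hi)
  rw [hpow, Complex.norm_one_sub_exp_ofReal_mul_I, mul_div_cancel_left₀ _ two_ne_zero,
    abs_of_pos (Real.sin_pi_mul_pos h0 h1)]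

theorem sum_log_sin_pi_mul_succ_div_succ (n : ℕ) :
    ∑ i ∈ range n, Real.log (sin (π * (((i : ℝ) + 1) / (n + 1)))) =
      Real.log (n + 1) - n * Real.log 2 := by
  have hsin (i : ℕ) (hi : i ∈ range n) : 0 < sin (π * (((i : ℝ) + 1) / (n + 1))) :=
    Real.sin_pi_mul_pos (succ_div_succ_mem_Ioo (mem_range.mp hi)).1
      (succ_div_succ_mem_Ioo (mem_range.mp hi)).2
  have hlog := congrArg Real.log (prod_two_mul_sin_pi_mul_succ_div_succ n)
  rw [Real.log_prod fun i hi => (mul_pos two_pos (hsin i hi)).ne',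
    sum_congr rfl fun i hi => Real.log_mul two_ne_zero (hsin i hi).ne', sum_add_distrib,
    sum_const, card_range, nsmul_eq_mul] at hlog
  linarith

theorem Real.log_Gamma_add_log_Gamma_one_sub {x : ℝ} (h0 : 0 < x) (h1 : x < 1) :
    Real.log (Gamma x) + Real.log (Gamma (1 - x)) =
      Real.log π - Real.log (sin (π * x)) := by
  rw [← Real.log_mul (Real.Gamma_pos_of_pos h0).ne' (Real.Gamma_pos_of_pos (by linarith)).ne',
    Real.Gamma_mul_Gamma_one_sub, Real.log_div Real.pi_ne_zero (Real.sin_pi_mul_pos h0 h1).ne']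

theorem sum_log_Gamma_div (q : ℕ) (hq : 0 < q) :
    ∑ i ∈ Icc 1 q, Real.log (Gamma (i / q)) =
      ((q - 1) * Real.log (2 * π) - Real.log q) / 2 := by
  obtain ⟨n, rfl⟩ : ∃ n, q = n + 1 := ⟨q - 1, by omega⟩
  set x : ℕ → ℝ := fun i => ((i : ℝ) + 1) / (n + 1)
  have hx (i : ℕ) (hi : i ∈ range n) : x i ∈ Set.Ioo 0 1 := succ_div_succ_mem_Ioo (mem_range.mp hi)
  have hreflect : ∑ i ∈ range n, Real.log (Gamma (1 - x i)) =
      ∑ i ∈ range n, Real.log (Gamma (x i)) := by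
    rw [← sum_range_reflect]
    refine sum_congr rfl fun i hi => ?_
    have : i < n := mem_range.mp hi
    congr 2
    simp only [x]
    rw [Nat.cast_sub (by omega), Nat.cast_sub (by omega)]
    field_simp
    ring
  have hlog_sin : ∑ i ∈ range n, Real.log (sin (π * x i)) =
      Real.log (n + 1) - n * Real.log 2 := sum_log_sin_pi_mul_succ_div_succ n
  have hsum : 2 * ∑ i ∈ range n, Real.log (Gamma (x i)) =
      n * Real.log π - ∑ i ∈ range n, Real.log (sin (π * x i)) := by
    rw [two_mul]
    nth_rewrite 2 [← hreflect]
    rw [← sum_add_distrib, sum_congr rfl fun i hi =>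
      Real.log_Gamma_add_log_Gamma_one_sub (hx i hi).1 (hx i hi).2, sum_sub_distrib, sum_const,
      card_range, nsmul_eq_mul]
  have htop : Gamma (((n + 1 : ℕ) : ℝ) / ((n + 1 : ℕ) : ℝ)) = 1 := by
    rw [div_self (by positivity), Real.Gamma_one]
  rw [sum_Icc_one_eq_sum_range, sum_range_succ, htop, Real.log_one, add_zero,
    Real.log_mul two_ne_zero Real.pi_ne_zero]
  push_cast
  change ∑ i ∈ range n, Real.log (Gamma (x i)) = _
  linarith

theorem sum_divisors_moebius_mul_div {R : Type*} [Ring R] (n : ℕ) :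
    ∑ d ∈ n.divisors, (μ d : R) * (n / d : ℕ) = n.totient := by
  rcases n.eq_zero_or_pos with rfl | hn
  · simp
  rw [← Nat.sum_divisorsAntidiagonal fun d e => (μ d : R) * e]
  refine (sum_eq_iff_sum_mul_moebius_eq (f := fun n => (n.totient : R)) (g := fun n => (n : R))).mp
    (fun n _ => ?_) n hn
  rw [← Nat.cast_sum, Nat.sum_totient]

theorem Nat.divisors_filter_not_dvd {n p : ℕ} (hp : p.Prime) (hn : n ≠ 0) :
    {d ∈ n.divisors | ¬p ∣ d} = (ordCompl[p] n).divisors := by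
  ext d
  simp only [mem_filter, Nat.mem_divisors, ne_eq, (Nat.ordCompl_pos p hn).ne', not_false_eq_true,
    and_true, hn]
  constructor
  · rintro ⟨hdn, hpd⟩
    have hcop : d.Coprime (ordProj[p] n) :=
      ((Nat.Prime.coprime_iff_not_dvd hp).mpr hpd).symm.pow_right _
    exact hcop.dvd_of_dvd_mul_left ((Nat.ordProj_mul_ordCompl_eq_self n p).symm ▸ hdn)
  · intro hd
    exact ⟨hd.trans (Nat.ordCompl_dvd n p), fun hpd =>
      (Nat.Prime.coprime_iff_not_dvd hp).mp (Nat.coprime_ordCompl hp hn) (hpd.trans hd)⟩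

theorem sum_divisors_filter_dvd_moebius_mul_div {R : Type*} [CommRing R] {n p : ℕ}
    (hp : p ∈ n.primeFactors) :
    ((p : R) - 1) * ∑ d ∈ n.divisors with p ∣ d, (μ d : R) * (n / d : ℕ) = -n.totient := by
  obtain ⟨hp, hpn, hn⟩ := Nat.mem_primeFactors.mp hp
  set v := n.factorization p
  set m := ordCompl[p] n
  have hv : v ≠ 0 := (hp.factorization_pos_of_dvd hn hpn).ne'
  have hnm : p ^ v * m = n := Nat.ordProj_mul_ordCompl_eq_self n p
  have htotient : n.totient = p ^ (v - 1) * (p - 1) * m.totient := by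
    rw [← hnm, Nat.totient_mul ((Nat.coprime_ordCompl hp hn).pow_left v),
      Nat.totient_prime_pow hp (Nat.pos_of_ne_zero hv)]
  have hcompl : ∑ d ∈ n.divisors with ¬p ∣ d, (μ d : R) * (n / d : ℕ) = p ^ v * m.totient := by
    rw [Nat.divisors_filter_not_dvd hp hn, ← sum_divisors_moebius_mul_div, mul_sum]
    refine sum_congr rfl fun d hd => ?_
    rw [← hnm, Nat.mul_div_assoc _ (Nat.dvd_of_mem_divisors hd)]
    push_cast
    ring
  have hsplit := sum_filter_add_sum_filter_not n.divisors (p ∣ ·) fun d => (μ d : R) * (n / d : ℕ)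
  rw [hcompl, sum_divisors_moebius_mul_div, htotient] at hsplit
  have hpow : (p : R) ^ v = p * p ^ (v - 1) := by
    rw [← pow_succ', Nat.sub_add_cancel (Nat.one_le_iff_ne_zero.mpr hv)]
  rw [eq_sub_of_add_eq hsplit, htotient, hpow]
  push_cast [Nat.cast_sub hp.one_le]
  ring

theorem Real.log_natCast_eq_sum_primeFactors {n : ℕ} (hn : Squarefree n) :
    Real.log n = ∑ p ∈ n.primeFactors, Real.log p := by
  conv_lhs => rw [← Nat.prod_primeFactors_of_squarefree hn]
  push_cast
  exact Real.log_prod fun p hp => by exact_mod_cast (Nat.prime_of_mem_primeFactors hp).ne_zero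

theorem Nat.primeFactors_filter_dvd {n d : ℕ} (hd : d ∣ n) (hn : n ≠ 0) :
    {p ∈ n.primeFactors | p ∣ d} = d.primeFactors := by
  ext p
  simp only [mem_filter, Nat.mem_primeFactors]
  exact ⟨fun ⟨⟨hp, _, _⟩, hpd⟩ => ⟨hp, hpd, ne_zero_of_dvd_ne_zero hn hd⟩,
    fun ⟨hp, hpd, _⟩ => ⟨⟨hp, hpd.trans hd, hn⟩, hpd⟩⟩

theorem sum_divisors_moebius_mul_div_mul_log (n : ℕ) :
    ∑ d ∈ n.divisors, (μ d : ℝ) * (n / d : ℕ) * Real.log d =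
      -n.totient * ∑ p ∈ n.primeFactors, Real.log p / (p - 1) := by
  have hlog (d : ℕ) (hd : d ∈ n.divisors) : (μ d : ℝ) * (n / d : ℕ) * Real.log d =
      ∑ p ∈ n.primeFactors with p ∣ d, (μ d : ℝ) * (n / d : ℕ) * Real.log p := by
    by_cases hμ : μ d = 0
    · simp [hμ]
    rw [← mul_sum, Nat.primeFactors_filter_dvd (Nat.dvd_of_mem_divisors hd)
      (Nat.mem_divisors.mp hd).2, ← Real.log_natCast_eq_sum_primeFactors
      (moebius_ne_zero_iff_squarefree.mp hμ)]
  rw [sum_congr rfl hlog]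
  simp_rw [sum_filter]
  rw [sum_comm, mul_sum]
  refine sum_congr rfl fun p hp => ?_
  have hp1 : (p : ℝ) - 1 ≠ 0 :=
    sub_ne_zero.mpr (by exact_mod_cast (Nat.prime_of_mem_primeFactors hp).one_lt.ne')
  have h := sum_divisors_filter_dvd_moebius_mul_div (R := ℝ) hp
  rw [← sum_filter, ← sum_mul, eq_div_of_mul_eq hp1 ((mul_comm _ _).trans h)]
  ring

theorem sum_divisors_moebius_mul_div_mul_sum_log_Gamma {k : ℕ} (hk : 1 < k) :
    ∑ t ∈ k.divisors, (μ t : ℝ) * (k / t : ℕ) * ∑ i ∈ Icc 1 t, Real.log (Gamma (i / t)) =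
      k.totient * ((1 / 2) * ∑ p ∈ k.primeFactors, Real.log p / (p - 1) -
        Real.log (2 * π) / 2) := by
  have hexpand (t : ℕ) (ht : t ∈ k.divisors) :
      (μ t : ℝ) * (k / t : ℕ) * ∑ i ∈ Icc 1 t, Real.log (Gamma (i / t)) =
        Real.log (2 * π) / 2 * ((μ t : ℝ) * k - (μ t : ℝ) * (k / t : ℕ)) -
          (μ t : ℝ) * (k / t : ℕ) * Real.log t / 2 := by
    have hkt : ((k / t : ℕ) : ℝ) * t = k := by
      exact_mod_cast Nat.div_mul_cancel (Nat.dvd_of_mem_divisors ht)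
    rw [sum_log_Gamma_div t (Nat.pos_of_mem_divisors ht)]
    linear_combination (μ t : ℝ) * Real.log (2 * π) / 2 * hkt
  rw [sum_congr rfl hexpand, sum_sub_distrib, ← mul_sum, sum_sub_distrib, ← sum_mul,
    sum_divisors_moebius, if_neg hk.ne', sum_divisors_moebius_mul_div, ← sum_div,
    sum_divisors_moebius_mul_div_mul_log]
  ring

theorem logGamma_weighted_average_ramanujan_sum (k : ℕ) (hk : 1 < k) :
    (1 / (Nat.totient k : ℂ)) *
        ∑ j ∈ Finset.Icc 1 k, (Real.log (Real.Gamma ((j : ℝ) / (k : ℝ))) : ℂ) * ramanujanSum k j =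
      ((1 / 2 : ℝ) * ∑ p ∈ k.primeFactors, Real.log p / ((p : ℝ) - 1)
        - Real.log (2 * Real.pi) / 2 : ℝ) := by
  have hφ : (k.totient : ℂ) ≠ 0 := by exact_mod_cast (Nat.totient_pos.mpr (by omega)).ne'
  have hrescale (t : ℕ) (ht : t ∈ k.divisors) (i : ℕ) :
      ((k / t * i : ℕ) : ℝ) / k = i / t := by
    obtain ⟨q, rfl⟩ := Nat.dvd_of_mem_divisors ht
    have hq : (q : ℝ) ≠ 0 := by
      exact_mod_cast right_ne_zero_of_mul (Nat.mem_divisors.mp ht).2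
    rw [Nat.mul_div_cancel_left q (Nat.pos_of_mem_divisors ht)]
    push_cast
    field_simp
  have hinner (t : ℕ) (ht : t ∈ k.divisors) :
      (μ t : ℂ) * (k / t : ℕ) * ∑ i ∈ Icc 1 t, (Real.log (Gamma ((k / t * i : ℕ) / k)) : ℂ) =
        ((μ t * (k / t : ℕ) * ∑ i ∈ Icc 1 t, Real.log (Gamma (i / t)) : ℝ) : ℂ) := by
    simp_rw [hrescale t ht]
    push_cast
    rfl
  rw [sum_mul_ramanujanSum, sum_congr rfl hinner, ← Complex.ofReal_sum,
    sum_divisors_moebius_mul_div_mul_sum_log_Gamma hk]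
  push_cast
  field_simp
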